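/- arXiv:2605.19419 — 3 statements merged into one kernel-verified Lean document; each statement's English description precedes it below -/
import Mathlib

section
/- Abelian property (Dhar): for a configuration η on a finite set K ⊆ ℤ^d, any maximal sequence of legal topplings (toppling an unstable vertex at each step) terminates in a stable configuration, and both the final stable configuration and the number of times each vertex is toppled are independent of the order in which the topplings are performed. -/
abbrev Vert (d : ℕ) := Fin d → ℤ

def SAdj {d : ℕ} (x y : Vert d) : Prop := (∑ i, |x i - y i|) = 1

instance {d : ℕ} (x y : Vert d) : Decidable (SAdj x y) := by
  unfold SAdj; infer_instance

/-- Toppling `v`: `v` loses `2d` grains, each neighbour of `v` in `K` gains one. -/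
def topple (d : ℕ) (K : Finset (Vert d)) (v : Vert d) (η : Vert d → ℕ) : Vert d → ℕ :=
  fun x => if x = v then η v - 2 * d
    else if SAdj x v ∧ x ∈ K then η x + 1 else η x

/-- Apply a sequence of topplings. -/
def applyList (d : ℕ) (K : Finset (Vert d)) : List (Vert d) → (Vert d → ℕ) → (Vert d → ℕ)
  | [], η => η
  | v :: L, η => applyList d K L (topple d K v η)

/-- A legal toppling sequence: at each step the toppled vertex lies in `K` and is
unstable (height at least `2d`) in the current configuration. -/
inductive Legal (d : ℕ) (K : Finset (Vert d)) : (Vert d → ℕ) → List (Vert d) → Prop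
  | nil (η : Vert d → ℕ) : Legal d K η []
  | cons (η : Vert d → ℕ) (v : Vert d) (L : List (Vert d)) (hv : v ∈ K)
      (h : 2 * d ≤ η v) (hL : Legal d K (topple d K v η) L) : Legal d K η (v :: L)

/-- A configuration is stable if every vertex of `K` has height less than `2d`. -/
def Stable (d : ℕ) (K : Finset (Vert d)) (η : Vert d → ℕ) : Prop := ∀ v ∈ K, η v < 2 * d

lemma topple_self (d : ℕ) (K : Finset (Vert d)) (v : Vert d) (η : Vert d → ℕ) :
    topple d K v η v = η v - 2 * d := if_pos rfl

lemma topple_other (d : ℕ) (K : Finset (Vert d)) (v x : Vert d) (η : Vert d → ℕ)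
    (h : x ≠ v) :
    topple d K v η x = if SAdj x v ∧ x ∈ K then η x + 1 else η x := if_neg h

lemma legal_append (d : ℕ) (K : Finset (Vert d)) (L L' : List (Vert d)) (η : Vert d → ℕ) :
    Legal d K η (L ++ L') ↔ Legal d K η L ∧ Legal d K (applyList d K L η) L' := by
  induction L generalizing η with
  | nil => exact ⟨fun h => ⟨Legal.nil η, h⟩, fun h => h.2⟩
  | cons v L ih =>
    constructor
    · rintro h; cases h with
      | cons _ _ _ hv hle hL =>
        have hL' := (ih (topple d K v η)).mp hL
        exact ⟨Legal.cons _ _ _ hv hle hL'.1, hL'.2⟩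
    · rintro ⟨h1, h2⟩
      cases h1 with
      | cons _ _ _ hv hle hL =>
        exact Legal.cons _ _ _ hv hle ((ih (topple d K v η)).mpr ⟨hL, h2⟩)

lemma le_topple (d : ℕ) (K : Finset (Vert d)) (v w : Vert d) (η : Vert d → ℕ) (h : w ≠ v) :
    η w ≤ topple d K v η w := by
  rw [topple_other d K v w η h]; split <;> omega

lemma topple_comm (d : ℕ) (K : Finset (Vert d)) (v w : Vert d) (η : Vert d → ℕ)
    (hv : 2 * d ≤ η v) (hw : 2 * d ≤ η w) (hvw : v ≠ w) :
    topple d K v (topple d K w η) = topple d K w (topple d K v η) := by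
  funext x
  by_cases hxv : x = v
  · subst hxv
    rw [topple_self, topple_other d K w x η hvw, topple_other d K w x _ hvw,
        topple_self]
    split <;> omega
  · by_cases hxw : x = w
    · subst hxw
      rw [topple_other d K v x _ hxv, topple_self d K x η,
        topple_self d K x (topple d K v η), topple_other d K v x η hxv]
      split <;> omega
    · rw [topple_other d K v x _ hxv, topple_other d K w x η hxw,
        topple_other d K w x _ hxw, topple_other d K v x η hxv]
      split <;> split <;> omega

lemma move_front (d : ℕ) (K : Finset (Vert d)) :
    ∀ (L : List (Vert d)) (η : Vert d → ℕ), Legal d K η L →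
    Stable d K (applyList d K L η) →
    ∀ v, v ∈ K → 2 * d ≤ η v →
    ∃ L', Legal d K (topple d K v η) L' ∧
      applyList d K L' (topple d K v η) = applyList d K L η ∧ L.Perm (v :: L') := by
  intro L
  induction L with
  | nil =>
    intro η _ hst v hvK hv
    exact absurd (hst v hvK) (by simpa [applyList] using not_lt.mpr hv)
  | cons w L ih =>
    intro η hleg hst v hvK hv
    cases hleg with
    | cons _ _ _ hwK hwle hL =>
      by_cases hwv : w = v
      · subst hwv
        exact ⟨L, hL, rfl, List.Perm.refl _⟩
      · have hst' : Stable d K (applyList d K L (topple d K w η)) := hst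
        have hv' : 2 * d ≤ topple d K w η v :=
          le_trans hv (le_topple d K w v η (Ne.symm hwv))
        obtain ⟨L'', hleg'', happ'', hperm''⟩ := ih (topple d K w η) hL hst' v hvK hv'
        refine ⟨w :: L'', ?_, ?_, ?_⟩
        · refine Legal.cons _ _ _ hwK (le_trans hwle (le_topple d K v w η hwv)) ?_
          rw [topple_comm d K w v η hwle hv hwv]
          exact hleg''
        · show applyList d K L'' (topple d K w (topple d K v η)) = _
          rw [topple_comm d K w v η hwle hv hwv]
          exact happ''
        · exact (hperm''.cons w).trans (List.Perm.swap v w L'')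

lemma unique_aux (d : ℕ) (K : Finset (Vert d)) :
    ∀ (L₂ : List (Vert d)) (η : Vert d → ℕ) (L₁ : List (Vert d)),
      Legal d K η L₁ → Legal d K η L₂ →
      Stable d K (applyList d K L₁ η) → Stable d K (applyList d K L₂ η) →
      applyList d K L₁ η = applyList d K L₂ η ∧ ∀ v, L₁.count v = L₂.count v := by
  intro L₂
  induction L₂ with
  | nil =>
    intro η L₁ h1 _ _ hs2
    cases h1 with
    | nil => exact ⟨rfl, fun _ => rfl⟩
    | cons _ w L hwK hwle _ => exact absurd (hs2 w hwK) (not_lt.mpr hwle)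
  | cons v L₂' ih =>
    intro η L₁ h1 h2 hs1 hs2
    cases h2 with
    | cons _ _ _ hvK hvle hL2 =>
      obtain ⟨L₁', hleg', happ', hperm'⟩ := move_front d K L₁ η h1 hs1 v hvK hvle
      have hs1' : Stable d K (applyList d K L₁' (topple d K v η)) := happ' ▸ hs1
      have hs2' : Stable d K (applyList d K L₂' (topple d K v η)) := hs2
      obtain ⟨heq, hcnt⟩ := ih (topple d K v η) L₁' hleg' hL2 hs1' hs2'
      refine ⟨?_, ?_⟩
      · show applyList d K L₁ η = applyList d K L₂' (topple d K v η)
        rw [← happ', heq]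
      · intro x
        rw [hperm'.count_eq x]
        simp [List.count_cons, hcnt x]

/-- Dhar's Abelian property: any maximal legal toppling sequence ends in a stable
configuration, and any two legal toppling sequences ending in stable configurations
produce the same final configuration and topple each vertex the same number of times. -/
theorem abelian_property (d : ℕ) (K : Finset (Vert d)) :
    (∀ (η : Vert d → ℕ) (L : List (Vert d)), Legal d K η L →
      (∀ v, ¬ Legal d K η (L ++ [v])) → Stable d K (applyList d K L η)) ∧
    (∀ (η : Vert d → ℕ) (L₁ L₂ : List (Vert d)),
      Legal d K η L₁ → Legal d K η L₂ →
      Stable d K (applyList d K L₁ η) → Stable d K (applyList d K L₂ η) →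
      applyList d K L₁ η = applyList d K L₂ η ∧ ∀ v, L₁.count v = L₂.count v) := by
  constructor
  · intro η L hleg hmax v hvK
    by_contra h
    push_neg at h
    exact hmax v ((legal_append d K L [v] η).mpr
      ⟨hleg, Legal.cons _ _ _ hvK h (Legal.nil _)⟩)
  · intro η L₁ L₂ h1 h2 hs1 hs2
    exact unique_aux d K L₂ η L₁ h1 h2 hs1 hs2
end

section
/- Every unstable sandpile configuration on a finite connected set K ⊆ ℤ^d with nonempty boundary stabilizes after finitely many topplings; that is, any sequence of legal topplings must terminate. -/
namespace SP
variable {d : ℕ}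

lemma sadj_symm {x y : Vert d} (h : SAdj x y) : SAdj y x := by
  unfold SAdj at *
  rw [← h]
  exact Finset.sum_congr rfl (fun i _ => abs_sub_comm _ _)

lemma sadj_irrefl (x : Vert d) : ¬ SAdj x x := by
  unfold SAdj; simp

lemma sadj_ne {x y : Vert d} (h : SAdj x y) : x ≠ y := by
  rintro rfl; exact sadj_irrefl x h

lemma sadj_d_pos {x y : Vert d} (h : SAdj x y) : 1 ≤ d := by
  rcases Nat.eq_zero_or_pos d with hd | hd
  · subst hd; unfold SAdj at h; simp at h
  · exact hd

lemma sadj_form {v y : Vert d} (h : SAdj v y) :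
    ∃ p : Fin d × Bool, y = Function.update v p.1 (v p.1 + if p.2 then 1 else -1) := by
  unfold SAdj at h
  have hpos : (0:ℤ) < ∑ i, |v i - y i| := by rw [h]; norm_num
  obtain ⟨i, -, hi⟩ := Finset.exists_lt_of_sum_lt (f := fun _ => (0:ℤ))
    (g := fun i => |v i - y i|) (by simpa using hpos)
  have hle : |v i - y i| ≤ 1 := by
    rw [← h]
    exact Finset.single_le_sum (f := fun i => |v i - y i|)
      (fun j _ => abs_nonneg _) (Finset.mem_univ i)
  have hi1 : |v i - y i| = 1 := le_antisymm hle hi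
  have hrest : ∀ j, j ≠ i → v j = y j := by
    intro j hj
    have hsum : ∑ k ∈ Finset.univ.erase i, |v k - y k| = 0 := by
      have h2 := Finset.add_sum_erase Finset.univ (fun k => |v k - y k|) (Finset.mem_univ i)
      rw [hi1, h] at h2
      omega
    have := (Finset.sum_eq_zero_iff_of_nonneg (fun k _ => abs_nonneg (v k - y k))).1 hsum j
      (Finset.mem_erase.2 ⟨hj, Finset.mem_univ j⟩)
    have := abs_eq_zero.1 this
    linarith
  rcases abs_eq (by norm_num : (0:ℤ) ≤ 1) |>.1 hi1 with hc | hc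
  · refine ⟨⟨i, false⟩, funext fun j => ?_⟩
    by_cases hj : j = i
    · subst hj; simp [Function.update]; linarith
    · simp [Function.update, hj]; exact (hrest j hj).symm
  · refine ⟨⟨i, true⟩, funext fun j => ?_⟩
    by_cases hj : j = i
    · subst hj; simp [Function.update]; linarith
    · simp [Function.update, hj]; exact (hrest j hj).symm

lemma neighbors_card_le (v : Vert d) (S : Finset (Vert d)) (hS : ∀ y ∈ S, SAdj v y) :
    S.card ≤ 2 * d := by
  classical
  have hsub : S ⊆ (Finset.univ : Finset (Fin d × Bool)).image
      (fun p => Function.update v p.1 (v p.1 + if p.2 then 1 else -1)) := by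
    intro y hy
    obtain ⟨p, hp⟩ := sadj_form (hS y hy)
    exact Finset.mem_image.2 ⟨p, Finset.mem_univ p, hp.symm⟩
  calc S.card ≤ _ := Finset.card_le_card hsub
    _ ≤ (Finset.univ : Finset (Fin d × Bool)).card := Finset.card_image_le
    _ = 2 * d := by simp [Finset.card_univ]; ring

end SP

namespace SP
variable {d : ℕ}

def reachB (K : Finset (Vert d)) : ℕ → Vert d → Prop
  | 0, v => v ∈ K ∧ ∃ z, z ∉ K ∧ SAdj v z
  | n+1, v => reachB K n v ∨ (v ∈ K ∧ ∃ y, SAdj v y ∧ reachB K n y)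

lemma reachB_mem {K : Finset (Vert d)} : ∀ {n v}, reachB K n v → v ∈ K := by
  intro n
  induction n with
  | zero => intro v h; exact h.1
  | succ n ih =>
    intro v h
    rcases h with h | h
    · exact ih h
    · exact h.1

lemma reachB_succ {K : Finset (Vert d)} {n v} (h : reachB K n v) : reachB K (n+1) v :=
  Or.inl h

lemma reachB_mono {K : Finset (Vert d)} {n m v} (hnm : n ≤ m) (h : reachB K n v) :
    reachB K m v := by
  induction hnm with
  | refl => exact h
  | step _ ih => exact Or.inl ih

open scoped Classical in
noncomputable def fdist (K : Finset (Vert d)) (v : Vert d) : ℕ :=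
  if h : ∃ n, reachB K n v then Nat.find h else 0

lemma exists_reach {K : Finset (Vert d)}
    (hK : ∀ v ∈ K, ∃ w ∈ K,
      Relation.ReflTransGen (fun a b => a ∈ K ∧ b ∈ K ∧ SAdj a b) v w ∧
      ∃ z, z ∉ K ∧ SAdj w z) {v : Vert d} (hv : v ∈ K) : ∃ n, reachB K n v := by
  obtain ⟨w, hw, hpath, hz⟩ := hK v hv
  clear hv
  induction hpath using Relation.ReflTransGen.head_induction_on with
  | refl => exact ⟨0, ⟨hw, hz⟩⟩
  | head hstep _ ih =>
    obtain ⟨n, hn⟩ := ih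
    exact ⟨n+1, Or.inr ⟨hstep.1, _, hstep.2.2, hn⟩⟩

section
variable {K : Finset (Vert d)}
variable (hK : ∀ v ∈ K, ∃ w ∈ K,
      Relation.ReflTransGen (fun a b => a ∈ K ∧ b ∈ K ∧ SAdj a b) v w ∧
      ∃ z, z ∉ K ∧ SAdj w z)
include hK

open scoped Classical in
lemma fdist_spec {v : Vert d} (hv : v ∈ K) : reachB K (fdist K v) v := by
  have h := exists_reach hK hv
  rw [fdist, dif_pos h]
  exact Nat.find_spec h

open scoped Classical in
lemma fdist_le {v : Vert d} {n : ℕ} (h : reachB K n v) : fdist K v ≤ n := by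
  have he : ∃ n, reachB K n v := ⟨n, h⟩
  rw [fdist, dif_pos he]
  exact Nat.find_min' he h

-- neighbour bound: f v ≤ f y + 1 for neighbours in K
lemma fdist_nbr {v y : Vert d} (hv : v ∈ K) (hy : y ∈ K) (hadj : SAdj v y) :
    fdist K v ≤ fdist K y + 1 :=
  fdist_le hK (Or.inr ⟨hv, y, hadj, fdist_spec hK hy⟩)

open scoped Classical in
lemma fdist_succ_nbr {v : Vert d} (hv : v ∈ K) {k : ℕ} (hfv : fdist K v = k + 1) :
    ∃ y, y ∈ K ∧ SAdj v y ∧ fdist K y ≤ k := by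
  have hr : reachB K (k+1) v := hfv ▸ fdist_spec hK hv
  have hnr : ¬ reachB K k v := by
    intro h
    have := fdist_le hK h
    omega
  rcases hr with h | ⟨-, y, hadj, hy⟩
  · exact absurd h hnr
  · exact ⟨y, reachB_mem hy, hadj, fdist_le hK hy⟩

lemma fdist_zero_bdry {v : Vert d} (hv : v ∈ K) (hfv : fdist K v = 0) :
    ∃ z, z ∉ K ∧ SAdj v z := by
  have hr : reachB K 0 v := hfv ▸ fdist_spec hK hv
  exact hr.2

end
end SP

namespace SP
variable {d : ℕ}

lemma num0 (m Q c : ℕ) (hm : 2 ≤ m) (hQ : 1 ≤ Q) (hc : c ≤ m - 1) :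
    c * (m * Q - 1) + 1 ≤ m * (m * Q - Q) := by
  have h1 : 1 ≤ m * Q := Nat.one_le_iff_ne_zero.2 (by positivity)
  have hQmQ : Q ≤ m * Q := Nat.le_mul_of_pos_left Q (by omega)
  have hc' : c + 1 ≤ m := by omega
  zify [h1, hQmQ]
  have hcz : (c : ℤ) ≤ (m : ℤ) - 1 := by omega
  have hmz : (2 : ℤ) ≤ m := by omega
  have hQz : (1 : ℤ) ≤ Q := by omega
  nlinarith [mul_le_mul_of_nonneg_right hcz (by nlinarith : (0:ℤ) ≤ (m:ℤ) * Q - 1)]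

lemma num1 (m Q P c : ℕ) (hm : 2 ≤ m) (hQ : 1 ≤ Q) (hc : c ≤ m - 1)
    (hP : m * (m * Q) ≤ P) :
    (P - m * (m * Q)) + c * (P - Q) + 1 ≤ m * (P - m * Q) := by
  have hmQ : m * Q ≤ m * (m * Q) := Nat.le_mul_of_pos_left (m*Q) (by omega)
  have hQmQ : Q ≤ m * Q := Nat.le_mul_of_pos_left Q (by omega)
  have hQP : Q ≤ P := by omega
  have hmQP : m * Q ≤ P := by omega
  zify [hP, hQP, hmQP]
  have hcz : (c : ℤ) ≤ (m : ℤ) - 1 := by omega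
  have hmz : (2 : ℤ) ≤ m := by omega
  have hQz : (1 : ℤ) ≤ Q := by omega
  nlinarith [mul_le_mul_of_nonneg_right hcz (by nlinarith : (0:ℤ) ≤ (P:ℤ) - Q),
    mul_le_mul_of_nonneg_right (by linarith : (1:ℤ) ≤ (m:ℤ) - 1) (by linarith : (0:ℤ) ≤ (Q:ℤ))]

lemma boundary_card (v : Vert d) (K : Finset (Vert d)) {z : Vert d}
    (hz : z ∉ K) (hvz : SAdj v z) :
    (K.filter (fun y => SAdj y v)).card + 1 ≤ 2 * d := by
  classical
  have hzf : z ∉ K.filter (fun y => SAdj y v) := fun h => hz (Finset.mem_of_mem_filter _ h)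
  have h2 := neighbors_card_le v (insert z (K.filter (fun y => SAdj y v))) ?_
  · rw [Finset.card_insert_of_notMem hzf] at h2; omega
  · intro y hy
    rcases Finset.mem_insert.1 hy with rfl | hy
    · exact hvz
    · exact sadj_symm (Finset.mem_filter.1 hy).2

noncomputable def wt (K : Finset (Vert d)) (v : Vert d) : ℕ :=
  (2*d) ^ (K.sup (fdist K) + 2) - (2*d) ^ (K.sup (fdist K) + 1 - fdist K v)

section
variable {K : Finset (Vert d)}
variable (hK : ∀ v ∈ K, ∃ w ∈ K,
      Relation.ReflTransGen (fun a b => a ∈ K ∧ b ∈ K ∧ SAdj a b) v w ∧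
      ∃ z, z ∉ K ∧ SAdj w z)
include hK

lemma key_ineq (hd : 1 ≤ d) {v : Vert d} (hv : v ∈ K) :
    (∑ y ∈ K.filter (fun y => SAdj y v), wt K y) + 1 ≤ 2 * d * wt K v := by
  classical
  have hm : 2 ≤ 2 * d := by omega
  have hfD : ∀ x ∈ K, fdist K x ≤ K.sup (fdist K) := fun x hx => Finset.le_sup hx
  set m := 2 * d with hm_def
  set D := K.sup (fdist K) with hD_def
  set N := K.filter (fun y => SAdj y v) with hN_def
  have hwt : ∀ x, wt K x = m ^ (D + 2) - m ^ (D + 1 - fdist K x) := fun x => rfl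
  have hNcard : N.card ≤ m := by
    apply neighbors_card_le v
    intro y hy; exact sadj_symm (Finset.mem_filter.1 hy).2
  rcases Nat.eq_zero_or_pos (fdist K v) with hfv | hfv
  · -- boundary case
    obtain ⟨z, hz, hvz⟩ := fdist_zero_bdry hK hv hfv
    have hcard : N.card + 1 ≤ m := boundary_card v K hz hvz
    have hQ1 : 1 ≤ m ^ (D + 1) := Nat.one_le_pow _ _ (by omega)
    have hwy : ∀ y ∈ N, wt K y ≤ m * m ^ (D + 1) - 1 := by
      intro y hy
      rw [hwt y]
      have : m ^ (D + 2) = m * m ^ (D + 1) := by ring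
      rw [← this]
      exact Nat.sub_le_sub_left (Nat.one_le_pow _ _ (by omega)) _
    have hsum : ∑ y ∈ N, wt K y ≤ N.card * (m * m ^ (D + 1) - 1) := by
      simpa using Finset.sum_le_card_nsmul N _ _ hwy
    have hwv : wt K v = m * m ^ (D + 1) - m ^ (D + 1) := by
      rw [hwt v, hfv]
      congr 1 <;> ring_nf
    rw [hwv]
    have hnum := num0 m (m ^ (D+1)) N.card hm hQ1 (by omega)
    omega
  · -- interior case
    obtain ⟨k, hk⟩ : ∃ k, fdist K v = k + 1 := ⟨fdist K v - 1, by omega⟩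
    obtain ⟨y0, hy0K, hy0adj, hy0f⟩ := fdist_succ_nbr hK hv hk
    have hy0N : y0 ∈ N := Finset.mem_filter.2 ⟨hy0K, sadj_symm hy0adj⟩
    have hkD : k + 1 ≤ D := hk ▸ hfD v hv
    obtain ⟨s, hs⟩ : ∃ s, D = s + 1 + k := ⟨D - 1 - k, by omega⟩
    have hQ1 : 1 ≤ m ^ s := Nat.one_le_pow _ _ (by omega)
    have hP : m * (m * m ^ s) ≤ m ^ (D + 2) := by
      have : m * (m * m ^ s) = m ^ (s + 2) := by ring
      rw [this]
      exact Nat.pow_le_pow_right (by omega) (by omega)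
    have hwv : wt K v = m ^ (D + 2) - m * m ^ s := by
      rw [hwt v, hk]
      congr 1
      have he : D + 1 - (k + 1) = s + 1 := by omega
      rw [he]; ring
    have hwy : ∀ y ∈ N, wt K y ≤ m ^ (D + 2) - m ^ s := by
      intro y hy
      obtain ⟨hyK, hyadj⟩ := Finset.mem_filter.1 hy
      have h1 : fdist K y ≤ fdist K v + 1 := fdist_nbr hK hyK hv hyadj
      have h2 : fdist K y ≤ D := hfD y hyK
      have h3 : s ≤ D + 1 - fdist K y := by omega
      rw [hwt y]
      exact Nat.sub_le_sub_left (Nat.pow_le_pow_right (by omega) h3) _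
    have hwy0 : wt K y0 ≤ m ^ (D + 2) - m * (m * m ^ s) := by
      have h3 : s + 2 ≤ D + 1 - fdist K y0 := by omega
      rw [hwt y0]
      apply Nat.sub_le_sub_left
      calc m * (m * m ^ s) = m ^ (s + 2) := by ring
        _ ≤ _ := Nat.pow_le_pow_right (by omega) h3
    have hsum : ∑ y ∈ N, wt K y ≤
        (m ^ (D + 2) - m * (m * m ^ s)) + (m - 1) * (m ^ (D + 2) - m ^ s) := by
      rw [← Finset.add_sum_erase N _ hy0N]
      have h1 : ∑ y ∈ N.erase y0, wt K y ≤ (N.erase y0).card * (m ^ (D + 2) - m ^ s) := by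
        simpa using Finset.sum_le_card_nsmul (N.erase y0) _ _
          (fun y hy => hwy y (Finset.mem_of_mem_erase hy))
      have h2 : (N.erase y0).card ≤ m - 1 := by
        have := Finset.card_erase_of_mem hy0N
        omega
      have h3 : (N.erase y0).card * (m ^ (D + 2) - m ^ s) ≤ (m - 1) * (m ^ (D + 2) - m ^ s) :=
        Nat.mul_le_mul_right _ h2
      omega
    rw [hwv]
    have hnum := num1 m (m ^ s) (m ^ (D + 2)) (m - 1) hm hQ1 (by omega) hP
    omega
end
end SP

namespace SP
variable {d : ℕ}

noncomputable def Phi (K : Finset (Vert d)) (η : Vert d → ℕ) : ℕ := ∑ x ∈ K, η x * wt K x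

section
variable {K : Finset (Vert d)}
variable (hK : ∀ v ∈ K, ∃ w ∈ K,
      Relation.ReflTransGen (fun a b => a ∈ K ∧ b ∈ K ∧ SAdj a b) v w ∧
      ∃ z, z ∉ K ∧ SAdj w z)
include hK

lemma phi_decrease (hd : 1 ≤ d) {η : Vert d → ℕ} {v : Vert d} (hv : v ∈ K)
    (hle : 2 * d ≤ η v) : Phi K (topple d K v η) + 1 ≤ Phi K η := by
  classical
  set N := K.filter (fun y => SAdj y v) with hN_def
  have key := key_ineq hK hd hv
  have hsplit : Phi K (topple d K v η) + 2 * d * wt K v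
      = Phi K η + ∑ y ∈ N, wt K y := by
    rw [Phi, Phi, ← Finset.add_sum_erase K _ hv, ← Finset.add_sum_erase K _ hv]
    have htv : topple d K v η v = η v - 2 * d := by rw [topple]; simp
    have herase : ∑ x ∈ K.erase v, topple d K v η x * wt K x
        = ∑ x ∈ K.erase v, η x * wt K x + ∑ y ∈ N, wt K y := by
      have hstep : ∀ x ∈ K.erase v, topple d K v η x * wt K x
          = η x * wt K x + (if SAdj x v then wt K x else 0) := by
        intro x hx
        obtain ⟨hxv, hxK⟩ := Finset.mem_erase.1 hx
        rw [topple]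
        simp only [hxv, if_false]
        by_cases hadj : SAdj x v
        · simp [hadj, hxK, add_mul]
        · simp [hadj]
      rw [Finset.sum_congr rfl hstep, Finset.sum_add_distrib]
      congr 1
      rw [← Finset.sum_filter]
      congr 1
      rw [hN_def]
      ext y
      simp only [Finset.mem_filter, Finset.mem_erase]
      constructor
      · rintro ⟨⟨-, hyK⟩, h⟩; exact ⟨hyK, h⟩
      · rintro ⟨hyK, h⟩; exact ⟨⟨sadj_ne h, hyK⟩, h⟩
    rw [htv, herase]
    have h2 : (η v - 2 * d) * wt K v + 2 * d * wt K v = η v * wt K v := by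
      rw [← add_mul, Nat.sub_add_cancel hle]
    omega
  set A := Phi K (topple d K v η) with hA
  set B := Phi K η with hB
  set C := ∑ y ∈ N, wt K y with hC
  set W := 2 * d * wt K v with hW
  omega

end
end SP


/-- Termination of sandpile dynamics: if every vertex of `K` is connected within `K`
to a vertex having a nearest neighbour outside `K` (so grains can be lost), then every
legal toppling sequence has bounded length; in particular any sequence of legal
topplings must terminate, and the configuration stabilizes after finitely many
topplings. -/
theorem sandpile_termination (d : ℕ) (K : Finset (Vert d)) (η : Vert d → ℕ)
    (hK : ∀ v ∈ K, ∃ w ∈ K,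
      Relation.ReflTransGen (fun a b => a ∈ K ∧ b ∈ K ∧ SAdj a b) v w ∧
      ∃ z, z ∉ K ∧ SAdj w z) :
    ∃ N : ℕ, ∀ L : List (Vert d), Legal d K η L → L.length ≤ N := by
  classical
  rcases eq_or_ne K ∅ with rfl | hKne
  · refine ⟨0, fun L hL => ?_⟩
    cases hL with
    | nil => simp
    | cons η v L hv h hL2 => exact absurd hv (by simp)
  · obtain ⟨v0, hv0⟩ := Finset.nonempty_iff_ne_empty.2 hKne
    obtain ⟨w, hw, -, z, hz, hwz⟩ := hK v0 hv0
    have hd : 1 ≤ d := SP.sadj_d_pos hwz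
    refine ⟨SP.Phi K η, ?_⟩
    suffices h : ∀ L : List (Vert d), ∀ η' : Vert d → ℕ,
        Legal d K η' L → L.length ≤ SP.Phi K η' from fun L hL => h L η hL
    intro L
    induction L with
    | nil => intro η' _; simp
    | cons v L ih =>
      intro η' hL
      cases hL with
      | cons _ _ _ hv hge hL2 =>
        have h1 := ih _ hL2
        have h2 := SP.phi_decrease hK hd hv hge
        simp only [List.length_cons]
        omega
end

section
/- Dhar's formula: for a stationary (recurrent) sandpile measure ν_K on a finite set K ⊆ ℤ^d, the expected number of topplings at x caused by adding one grain at v and stabilizing equals G_K(v,x), the Green's function of the simple random walk killed on exiting K; i.e. ∫ N_K(v,x;η) dν_K(η) = (Δ_K^{-1})_{vx}. -/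
/-- Adding one grain at `v`. -/
def addGrain {d : ℕ} (v : Vert d) (η : Vert d → ℕ) : Vert d → ℕ :=
  fun x => η x + if x = v then 1 else 0

/-- The toppling matrix `Δ_K` of `ℤ^d` restricted to `K`. -/
noncomputable def lapK (d : ℕ) (K : Finset (Vert d)) : Matrix ↥K ↥K ℝ :=
  fun x y => if (x : Vert d) = (y : Vert d) then (2 * d : ℝ)
    else if SAdj (x : Vert d) (y : Vert d) then -1 else 0

/-- The recurrent stable configurations on `K` (supported on `K`), characterized by
the burning test: every nonempty `F ⊆ K` has a vertex `v` whose height is at least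
its number of neighbours in `F`. -/
def RecurrentSet (d : ℕ) (K : Finset (Vert d)) : Set (Vert d → ℕ) :=
  {η | (∀ x, x ∉ K → η x = 0) ∧ Stable d K η ∧
    ∀ F ⊆ K, F.Nonempty → ∃ v ∈ F, (F.filter (fun x => SAdj x v)).card ≤ η v}

open Finset

section Adjacency

variable {d : ℕ}

lemma sAdj_comm {x y : Vert d} : SAdj x y ↔ SAdj y x := by
  simp only [SAdj, abs_sub_comm (x _)]

lemma sAdj_irrefl (x : Vert d) : ¬ SAdj x x := by simp [SAdj]

def latticeNeighbor (v : Vert d) (p : Fin d × Bool) : Vert d :=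
  v + Pi.single p.1 (if p.2 then 1 else -1)

lemma exists_latticeNeighbor_eq_of_sAdj {z v : Vert d} (h : SAdj z v) :
    ∃ p, latticeNeighbor v p = z := by
  obtain ⟨i, -, hi⟩ := exists_ne_zero_of_sum_ne_zero (h.symm ▸ one_ne_zero :
    ∑ i, |z i - v i| ≠ 0)
  have hsplit := add_sum_erase univ (fun j => |z j - v j|) (mem_univ i)
  rw [h] at hsplit
  have hrest : ∀ j ∈ univ.erase i, |z j - v j| = 0 := by
    have hnonneg : ∀ j ∈ univ.erase i, 0 ≤ |z j - v j| := fun _ _ => abs_nonneg _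
    have hsum_nonneg := sum_nonneg hnonneg
    exact (sum_eq_zero_iff_of_nonneg hnonneg).1 (by have := abs_nonneg (z i - v i); omega)
  have hi1 : |z i - v i| = 1 := by
    rw [sum_eq_zero (fun j hj => hrest j hj)] at hsplit; omega
  refine ⟨(i, decide (z i - v i = 1)), funext fun j => ?_⟩
  rcases eq_or_ne j i with rfl | hj
  · simp only [latticeNeighbor, Pi.add_apply, Pi.single_eq_same]
    rcases abs_eq (zero_le_one' ℤ) |>.1 hi1 with h' | h' <;> simp [h'] <;> omega
  · have := hrest j (mem_erase.2 ⟨hj, mem_univ j⟩)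
    simp only [latticeNeighbor, Pi.add_apply, Pi.single_eq_of_ne hj]
    rw [abs_eq_zero] at this; omega

lemma filter_sAdj_subset_image (F : Finset (Vert d)) (v : Vert d) :
    F.filter (SAdj · v) ⊆ univ.image (latticeNeighbor v) := by
  intro z hz
  obtain ⟨p, hp⟩ := exists_latticeNeighbor_eq_of_sAdj (mem_filter.1 hz).2
  exact mem_image.2 ⟨p, mem_univ p, hp⟩

lemma card_filter_sAdj_le (F : Finset (Vert d)) (v : Vert d) :
    #(F.filter (SAdj · v)) ≤ 2 * d := by
  calc #(F.filter (SAdj · v)) ≤ #(univ.image (latticeNeighbor v)) :=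
        card_le_card (filter_sAdj_subset_image F v)
    _ ≤ 2 * d := card_image_le.trans (by simp [mul_comm])

lemma card_filter_sAdj_le_of_forall_le {F : Finset (Vert d)} {v : Vert d} (i : Fin d)
    (hv : ∀ z ∈ F, z i ≤ v i) :
    #(F.filter (SAdj · v)) ≤ 2 * d - 1 := by
  have hsub : F.filter (SAdj · v) ⊆ (univ.erase (i, true)).image (latticeNeighbor v) := by
    intro z hz
    obtain ⟨p, hp⟩ := mem_image.1 (filter_sAdj_subset_image F v hz)
    refine mem_image.2 ⟨p, mem_erase.2 ⟨?_, mem_univ p⟩, hp.2⟩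
    rintro rfl
    have := hv z (mem_filter.1 hz).1
    rw [← hp.2] at this
    simp [latticeNeighbor] at this
  calc #(F.filter (SAdj · v)) ≤ #((univ.erase (i, true)).image (latticeNeighbor v)) :=
        card_le_card hsub
    _ ≤ 2 * d - 1 := card_image_le.trans (by simp [card_erase_of_mem, mul_comm])

end Adjacency

section Toppling

variable {d : ℕ} {K : Finset (Vert d)}

lemma topple_apply_of_ne {w u : Vert d} (η : Vert d → ℕ) (h : u ≠ w) :
    topple d K w η u = η u + if SAdj u w ∧ u ∈ K then 1 else 0 := by
  unfold topple; split_ifs <;> simp_all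

lemma Legal.applyList_apply_of_notMem {η : Vert d → ℕ} {L : List (Vert d)}
    (hL : Legal d K η L) {x : Vert d} (hx : x ∉ K) : applyList d K L η x = η x := by
  induction hL with
  | nil => rfl
  | cons η w L hw _ _ ih =>
    rw [applyList, ih, topple_apply_of_ne η (ne_of_mem_of_not_mem hw hx).symm,
      if_neg (by tauto), add_zero]

def Burnable (d : ℕ) (K : Finset (Vert d)) (η : Vert d → ℕ) : Prop :=
  ∀ F ⊆ K, F.Nonempty → ∃ u ∈ F, #(F.filter (SAdj · u)) ≤ η u

lemma Burnable.mono {η η' : Vert d → ℕ} (hη : Burnable d K η) (h : η ≤ η') :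
    Burnable d K η' := fun F hF hne =>
  let ⟨u, hu, hc⟩ := hη F hF hne
  ⟨u, hu, hc.trans (h u)⟩

lemma Burnable.topple {η : Vert d → ℕ} (hη : Burnable d K η) (w : Vert d) :
    Burnable d K (topple d K w η) := by
  intro F hF hne
  by_cases hwF : w ∈ F
  · rcases (F.erase w).eq_empty_or_nonempty with hF' | hF'
    · refine ⟨w, hwF, ?_⟩
      rw [← insert_erase hwF, hF', insert_empty, filter_singleton, if_neg (sAdj_irrefl w)]
      exact Nat.zero_le _
    -- `u` burns in `F \ {w}`; in `F` it may have the extra neighbour `w`, which gave it a grain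
    obtain ⟨u, hu, hc⟩ := hη (F.erase w) ((erase_subset w F).trans hF) hF'
    obtain ⟨huw, huF⟩ := mem_erase.1 hu
    refine ⟨u, huF, ?_⟩
    rw [topple_apply_of_ne η huw]
    rw [filter_erase] at hc
    by_cases hwu : SAdj w u
    · have hw : w ∈ F.filter (SAdj · u) := mem_filter.2 ⟨hwF, hwu⟩
      have := card_erase_add_one hw
      rw [if_pos ⟨sAdj_comm.1 hwu, hF huF⟩]
      omega
    · have hw : w ∉ F.filter (SAdj · u) := fun h => hwu (mem_filter.1 h).2
      rw [erase_eq_of_notMem hw] at hc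
      exact hc.trans (Nat.le_add_right _ _)
  · obtain ⟨u, hu, hc⟩ := hη F hF hne
    refine ⟨u, hu, ?_⟩
    rw [topple_apply_of_ne η (ne_of_mem_of_not_mem hu hwF)]
    exact hc.trans (Nat.le_add_right _ _)

lemma Burnable.applyList {η : Vert d → ℕ} (hη : Burnable d K η) (L : List (Vert d)) :
    Burnable d K (applyList d K L η) := by
  induction L generalizing η with
  | nil => exact hη
  | cons w L ih => exact ih (hη.topple w)

end Toppling

section Laplacian

variable {d : ℕ} (K : Finset (Vert d)) {R : Type*} [CommRing R]

def laplacianOn : (Vert d → R) →ₗ[R] Vert d → R where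
  toFun f y := 2 * d * f y - ∑ z ∈ K with SAdj z y, f z
  map_add' f g := by
    ext y; simp only [Pi.add_apply, sum_add_distrib]; ring
  map_smul' c f := by
    ext y; simp only [Pi.smul_apply, smul_eq_mul, RingHom.id_apply, ← mul_sum]; ring

lemma laplacianOn_apply (f : Vert d → R) (y : Vert d) :
    laplacianOn K f y = 2 * d * f y - ∑ z ∈ K with SAdj z y, f z := rfl

variable {K}

open Classical in
lemma topple_apply_cast {η : Vert d → ℕ} {w y : Vert d} (hw : w ∈ K) (hη : 2 * d ≤ η w)
    (hy : y ∈ K) : (topple d K w η y : R) = η y - laplacianOn K (Pi.single w 1) y := by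
  rw [laplacianOn_apply, sum_pi_single']
  rcases eq_or_ne y w with rfl | hyw
  · simp [topple, sAdj_irrefl, hη]
  · rw [topple_apply_of_ne η hyw, Pi.single_eq_of_ne hyw]
    by_cases hadj : SAdj y w <;> simp [hadj, sAdj_comm (x := w), hw, hy]

lemma Legal.applyList_apply_cast {η : Vert d → ℕ} {L : List (Vert d)} (hL : Legal d K η L)
    {y : Vert d} (hy : y ∈ K) :
    (applyList d K L η y : R) = η y - laplacianOn K (fun z => (L.count z : R)) y := by
  classical
  induction hL with
  | nil => simp [applyList, ← Pi.zero_def]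
  | cons η w L hw hη _ ih =>
    have hcount :
        (fun z => ((w :: L).count z : R)) = Pi.single w 1 + fun z => (L.count z : R) := by
      ext z
      rcases eq_or_ne z w with rfl | hzw
      · simp [add_comm]
      · simp [hzw, hzw.symm]
    rw [applyList, ih, topple_apply_cast hw hη hy, hcount, map_add, Pi.add_apply]
    ring

end Laplacian

section Recurrent

variable {d : ℕ} {K : Finset (Vert d)}

lemma Stable.nonpos_of_eq_sub_laplacianOn {η₁ η₂ : Vert d → ℕ} (h₁ : Stable d K η₁)
    (h₂ : Burnable d K η₂) {m : Vert d → ℤ}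
    (h : ∀ y ∈ K, (η₂ y : ℤ) = η₁ y - laplacianOn K m y) : ∀ y ∈ K, m y ≤ 0 := by
  by_contra! hpos
  obtain ⟨y₀, hy₀, hm₀⟩ := hpos
  have hK : K.Nonempty := ⟨y₀, hy₀⟩
  set M := K.sup' hK m
  have hle : ∀ z ∈ K, m z ≤ M := fun z hz => le_sup' m hz
  have hM : 1 ≤ M := hm₀.trans_le (hle y₀ hy₀)
  obtain ⟨u₀, hu₀, hu₀M⟩ := exists_mem_eq_sup' hK m
  -- a vertex `u` burning first in `{m = M}` loses `2d M` grains but regains at most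
  -- `(M - 1)` from each neighbour, plus one from each neighbour in `{m = M}`
  obtain ⟨u, hu, hburn⟩ := h₂ (K.filter (m · = M)) (filter_subset _ _)
    ⟨u₀, mem_filter.2 ⟨hu₀, hu₀M.symm⟩⟩
  obtain ⟨huK, huM⟩ := mem_filter.1 hu
  have hsum : ∑ z ∈ K with SAdj z u, m z ≤
      (M - 1) * #(K.filter (SAdj · u)) + #((K.filter (m · = M)).filter (SAdj · u)) := by
    calc ∑ z ∈ K with SAdj z u, m z
        ≤ ∑ z ∈ K with SAdj z u, ((M - 1) + if m z = M then 1 else 0) :=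
          sum_le_sum fun z hz => by have := hle z (mem_filter.1 hz).1; split_ifs <;> omega
      _ = _ := by
          rw [sum_add_distrib, sum_const, sum_boole, filter_filter, filter_filter]
          simp [and_comm, mul_comm]
  have hdeg : (M - 1) * #(K.filter (SAdj · u)) ≤ (M - 1) * (2 * d) :=
    mul_le_mul_of_nonneg_left (by exact_mod_cast card_filter_sAdj_le K u) (by omega)
  have hu₂ := h u huK
  have hu₁ : (η₁ u : ℤ) < 2 * d := by exact_mod_cast h₁ u huK
  rw [laplacianOn_apply, huM] at hu₂
  have : (#((K.filter (m · = M)).filter (SAdj · u)) : ℤ) ≤ η₂ u := by exact_mod_cast hburn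
  nlinarith

lemma recurrentSet_finite (d : ℕ) (K : Finset (Vert d)) : (RecurrentSet d K).Finite := by
  have hbounded :
      (fun η (z : K) => η z) '' RecurrentSet d K ⊆ Set.univ.pi fun _ => Set.Iio (2 * d) :=
    Set.image_subset_iff.2 fun η hη z _ => hη.2.1 z z.2
  refine .of_finite_image ((Set.Finite.pi fun _ => Set.finite_Iio _).subset hbounded) ?_
  intro η₁ h₁ η₂ h₂ he
  funext z
  by_cases hz : z ∈ K
  · exact congrFun he ⟨z, hz⟩
  · rw [h₁.1 z hz, h₂.1 z hz]

lemma maxStable_mem_recurrentSet (hd : 0 < d) (K : Finset (Vert d)) :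
    (fun z => if z ∈ K then 2 * d - 1 else 0) ∈ RecurrentSet d K := by
  refine ⟨fun z hz => if_neg hz, fun z hz => by simp only [if_pos hz]; omega, ?_⟩
  intro F hF hne
  -- a vertex of `F` with maximal first coordinate has at most `2d - 1` neighbours in `F`
  obtain ⟨u, hu, hmax⟩ := exists_max_image F (fun z => z ⟨0, hd⟩) hne
  exact ⟨u, hu, by simpa only [if_pos (hF hu)] using card_filter_sAdj_le_of_forall_le _ hmax⟩

lemma applyList_addGrain_mem_recurrentSet {v : Vert d} (hv : v ∈ K) {η : Vert d → ℕ}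
    (hη : η ∈ RecurrentSet d K) {L : List (Vert d)} (hL : Legal d K (addGrain v η) L)
    (hstable : Stable d K (applyList d K L (addGrain v η))) :
    applyList d K L (addGrain v η) ∈ RecurrentSet d K := by
  refine ⟨fun x hx => ?_, hstable, (Burnable.mono hη.2.2 ?_).applyList L⟩
  · rw [hL.applyList_apply_of_notMem hx, addGrain, hη.1 x hx,
      if_neg (ne_of_mem_of_not_mem hv hx).symm]
  · exact fun z => Nat.le_add_right _ _

lemma eq_of_applyList_addGrain_eq {v : Vert d} {η₁ η₂ : Vert d → ℕ}
    (h₁ : η₁ ∈ RecurrentSet d K) (h₂ : η₂ ∈ RecurrentSet d K) {L₁ L₂ : List (Vert d)}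
    (hL₁ : Legal d K (addGrain v η₁) L₁) (hL₂ : Legal d K (addGrain v η₂) L₂)
    (he : applyList d K L₁ (addGrain v η₁) = applyList d K L₂ (addGrain v η₂)) : η₁ = η₂ := by
  set m : Vert d → ℤ := (fun z => (L₁.count z : ℤ)) - fun z => (L₂.count z : ℤ)
  have hrel : ∀ y ∈ K, (η₂ y : ℤ) = η₁ y - laplacianOn K m y := by
    intro y hy
    have := congrFun he y
    rw [← Int.natCast_inj, hL₁.applyList_apply_cast hy, hL₂.applyList_apply_cast hy] at this
    simp only [addGrain, Nat.cast_add] at this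
    rw [map_sub, Pi.sub_apply]
    linarith
  have hrel' : ∀ y ∈ K, (η₁ y : ℤ) = η₂ y - laplacianOn K (-m) y := by
    intro y hy
    rw [map_neg, Pi.neg_apply, hrel y hy]
    ring
  have hm : ∀ y ∈ K, m y = 0 := fun y hy =>
    le_antisymm (h₁.2.1.nonpos_of_eq_sub_laplacianOn h₂.2.2 hrel y hy)
      (neg_nonpos.1 (h₂.2.1.nonpos_of_eq_sub_laplacianOn h₁.2.2 hrel' y hy))
  funext y
  by_cases hy : y ∈ K
  · have := hrel y hy
    rw [laplacianOn_apply, hm y hy, sum_eq_zero fun z hz => hm z (mem_filter.1 hz).1] at this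
    omega
  · rw [h₁.1 y hy, h₂.1 y hy]

end Recurrent

section TopplingMatrix

open Matrix

variable {d : ℕ} {K : Finset (Vert d)}

lemma lapK_mulVec_apply (f : Vert d → ℝ) (y : K) :
    (lapK d K *ᵥ fun z => f z) y = laplacianOn K f y := by
  have hentry : ∀ z : K, lapK d K y z * f z =
      (if z = y then 2 * d * f y else 0) - if SAdj (z : Vert d) y then f z else 0 := by
    intro z
    rcases eq_or_ne z y with rfl | hzy
    · simp [lapK, sAdj_irrefl]
    · have hzy' : (y : Vert d) ≠ z := fun h => hzy (Subtype.ext h).symm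
      by_cases hadj : SAdj (z : Vert d) y <;>
        simp [lapK, hzy, hzy', hadj, sAdj_comm (x := (y : Vert d))]
  simp only [mulVec, dotProduct]
  rw [sum_congr rfl fun z _ => hentry z, sum_sub_distrib,
    sum_ite_eq', if_pos (mem_univ y), laplacianOn_apply, sum_filter,
    sum_coe_sort K fun z => if SAdj z y then f z else 0]

lemma lapK_isSymm : (lapK d K).IsSymm := by
  ext y z
  simp only [transpose_apply, lapK, eq_comm (a := (z : Vert d)), sAdj_comm (x := (z : Vert d))]

lemma lapK_inv_apply_eq_of_laplacianOn_eq (hdet : IsUnit (lapK d K).det) {v x : Vert d}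
    (hv : v ∈ K) (hx : x ∈ K) {f : Vert d → ℝ}
    (hf : ∀ y ∈ K, laplacianOn K f y = if y = v then 1 else 0) :
    (lapK d K)⁻¹ ⟨v, hv⟩ ⟨x, hx⟩ = f x := by
  have hsolve : lapK d K *ᵥ (fun z : K => f z) = Pi.single ⟨v, hv⟩ 1 := by
    ext y
    simp [lapK_mulVec_apply, hf y y.2, Pi.single_apply, Subtype.ext_iff]
  have := congrFun (congrArg ((lapK d K)⁻¹ *ᵥ ·) hsolve) ⟨x, hx⟩
  rw [mulVec_mulVec, nonsing_inv_mul _ hdet, one_mulVec, mulVec_single_one] at this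
  rw [this, col_apply, ← lapK_isSymm.inv.apply]

lemma pos_of_isUnit_det_lapK (hK : K.Nonempty) (hdet : IsUnit (lapK d K).det) : 0 < d := by
  rcases Nat.eq_zero_or_pos d with rfl | hd
  · have : Nonempty K := hK.to_subtype
    have hzero : lapK 0 K = 0 := by
      ext y z
      simp [lapK, SAdj]
    simp [hzero] at hdet
  · exact hd

end TopplingMatrix

/-- Dhar's formula: under the uniform measure `ν_K` on recurrent configurations on a
finite `K ⊆ ℤ^d`, the expected number of topplings at `x` caused by adding one grain
at `v` and stabilizing equals `G_K(v,x) = (Δ_K⁻¹)_{vx}`. Here `N η x` is the number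
of topplings at `x` in (any) legal stabilization of `η + δ_v`. -/
theorem dhar_formula (d : ℕ) (K : Finset (Vert d)) (v x : Vert d)
    (hv : v ∈ K) (hx : x ∈ K) (hdet : IsUnit (lapK d K).det)
    (N : (Vert d → ℕ) → Vert d → ℕ)
    (hN : ∀ η ∈ RecurrentSet d K, ∃ L : List (Vert d),
      Legal d K (addGrain v η) L ∧
      Stable d K (applyList d K L (addGrain v η)) ∧
      ∀ y, L.count y = N η y) :
    (∑' η : (RecurrentSet d K), (N (η : Vert d → ℕ) x : ℝ))
        / ((RecurrentSet d K).ncard : ℝ)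
      = (lapK d K)⁻¹ ⟨v, hv⟩ ⟨x, hx⟩ := by
  classical
  have : Fintype (RecurrentSet d K) := (recurrentSet_finite d K).fintype
  have : Nonempty (RecurrentSet d K) :=
    ⟨⟨_, maxStable_mem_recurrentSet (pos_of_isUnit_det_lapK ⟨v, hv⟩ hdet) K⟩⟩
  choose L hL hstable hcount using hN
  let σ : RecurrentSet d K → RecurrentSet d K := fun η =>
    ⟨_, applyList_addGrain_mem_recurrentSet hv η.2 (hL η η.2) (hstable η η.2)⟩
  have hσ : σ.Bijective := Finite.injective_iff_bijective.1 fun η₁ η₂ h => Subtype.ext <|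
    eq_of_applyList_addGrain_eq η₁.2 η₂.2 (hL _ _) (hL _ _) (congrArg Subtype.val h)
  have hσ_apply : ∀ η : RecurrentSet d K, ∀ y ∈ K, ((σ η : Vert d → ℕ) y : ℝ) =
      η.1 y + (if y = v then 1 else 0) - laplacianOn K (fun z => (N η z : ℝ)) y := by
    intro η y hy
    simp only [σ, (hL η η.2).applyList_apply_cast hy, hcount, addGrain]
    push_cast; ring
  set n : ℝ := (Fintype.card (RecurrentSet d K) : ℝ)
  have hn : n ≠ 0 := Nat.cast_ne_zero.2 Fintype.card_ne_zero
  have hf : ∀ y ∈ K, laplacianOn K (n⁻¹ • ∑ η : RecurrentSet d K, fun z => (N η z : ℝ)) y =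
      if y = v then 1 else 0 := by
    intro y hy
    -- `σ` permutes the recurrent configurations, so the total height at `y` is unchanged
    have hstat := Equiv.sum_comp (Equiv.ofBijective σ hσ) fun η => (η.1 y : ℝ)
    simp only [Equiv.ofBijective_apply, hσ_apply _ y hy, sum_sub_distrib, sum_add_distrib,
      sum_const, card_univ, nsmul_eq_mul] at hstat
    rw [map_smul, map_sum, Pi.smul_apply, Finset.sum_apply, smul_eq_mul]
    field_simp
    linarith
  rw [lapK_inv_apply_eq_of_laplacianOn_eq hdet hv hx hf, tsum_fintype,
    Set.ncard_eq_toFinset_card', Set.toFinset_card]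
  simp [n, div_eq_inv_mul]
end
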